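/- arXiv:1608.08529 — 2 statements merged into one kernel-verified Lean document; each statement's English description precedes it below -/
import Mathlib

section
/- Let n ≥ 2 and let f be an (n-1)-times differentiable function on [a,b] with f⁽ⁱ⁾ ≥ 0 for i = 0,…,n-2. Let g be a strictly positive, continuous, increasing function on [a,b], and let α ≤ n be a real number such that f⁽ⁿ⁻¹⁾ ≥ (n!/(n-1))·f·‖g‖_∞^{n-α} on [a,b], where ‖g‖_∞ := sup{g(x) : x ∈ [a,b]}. Set K := g(a)^{α} if α ≥ 0 and K := g(b)^{α} if α < 0. Then (b-a)·f(a)ⁿ·K + (∫_a^b f·g)ⁿ ≤ ∫_a^b fⁿ·g^{α}. -/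
/-!
Write `F x = ∫ₐˣ f`, `P x = ∫ₐˣ f g`, `C = g(b)^(n-α)` and `c = n!/(n-1) · C`. Starting from
`f⁽ⁿ⁻¹⁾ ≥ c f` and comparing derivatives on `[a, x]` one order at a time gives
`c/j! · F^j f ≤ f⁽ⁿ⁻¹⁻ʲ⁾ f^j` for `j ≤ n - 2`; one more comparison, now with the exact derivative
of `f^(n-1)`, gives `f(a)^(n-1) + n C F^(n-1) ≤ f^(n-1)`, and multiplying by `f ≥ f(a)` gives
`f(a)^n + n C f F^(n-1) ≤ f^n`. As `g` increases, `P ≤ g F` and `g^n ≤ C g^α`, so the derivative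
of `(x - a) f(a)^n K + P^n` is at most `f^n g^α`; integrating over `[a, b]` concludes.
-/

open Set intervalIntegral MeasureTheory

section Calculus

variable {a b : ℝ}

theorem sub_le_sub_of_hasDerivAt_le {u v u' v' : ℝ → ℝ}
    (hu : ContinuousOn u (Icc a b)) (hv : ContinuousOn v (Icc a b))
    (hu' : ∀ x ∈ Ioo a b, HasDerivAt u (u' x) x) (hv' : ∀ x ∈ Ioo a b, HasDerivAt v (v' x) x)
    (hle : ∀ x ∈ Ioo a b, v' x ≤ u' x) {x : ℝ} (hx : x ∈ Icc a b) :
    v x - v a ≤ u x - u a := by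
  have hmono : MonotoneOn (fun y => u y - v y) (Icc a b) := by
    refine monotoneOn_of_deriv_nonneg (convex_Icc a b) (hu.sub hv) ?_ ?_ <;> rw [interior_Icc]
    · exact fun y hy => ((hu' y hy).fun_sub (hv' y hy)).differentiableAt.differentiableWithinAt
    · intro y hy
      rw [((hu' y hy).fun_sub (hv' y hy)).deriv]
      exact sub_nonneg.2 (hle y hy)
  have := hmono (left_mem_Icc.2 (hx.1.trans hx.2)) hx hx.1
  linarith

theorem continuousOn_primitive_Icc {h : ℝ → ℝ} (hab : a ≤ b) (hh : ContinuousOn h (Icc a b)) :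
    ContinuousOn (fun x => ∫ t in a..x, h t) (Icc a b) := by
  rw [← uIcc_of_le hab] at hh ⊢
  exact continuousOn_primitive_interval hh.integrableOn_uIcc

theorem hasDerivAt_primitive_of_mem_Ioo {h : ℝ → ℝ} (hh : ContinuousOn h (Icc a b)) {x : ℝ}
    (hx : x ∈ Ioo a b) : HasDerivAt (fun x => ∫ t in a..x, h t) (h x) x :=
  integral_hasDerivAt_right
    ((hh.mono (Icc_subset_Icc le_rfl hx.2.le)).intervalIntegrable_of_Icc hx.1.le)
    ((hh.mono Ioo_subset_Icc_self).stronglyMeasurableAtFilter isOpen_Ioo x hx)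
    (hh.continuousAt (Icc_mem_nhds hx.1 hx.2))

theorem hasDerivAt_iteratedDerivWithin_of_mem_nhds {𝕜 E : Type*} [NontriviallyNormedField 𝕜]
    [NormedAddCommGroup E] [NormedSpace 𝕜 E] {f : 𝕜 → E} {s : Set 𝕜} {x : 𝕜} {i : ℕ}
    (hd : DifferentiableWithinAt 𝕜 (iteratedDerivWithin i f s) s x) (hs : s ∈ nhds x) :
    HasDerivAt (iteratedDerivWithin i f s) (iteratedDerivWithin (i + 1) f s x) x := by
  rw [iteratedDerivWithin_succ]
  exact hd.hasDerivWithinAt.hasDerivAt hs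

end Calculus

section DerivativeChain

variable {a b c : ℝ} {N : ℕ} {D : ℕ → ℝ → ℝ} {F : ℝ → ℝ}

theorem primitive_pow_mul_le_of_growth
    (hD_cont : ∀ i < N, ContinuousOn (D i) (Icc a b))
    (hD_deriv : ∀ i < N, ∀ x ∈ Ioo a b, HasDerivAt (D i) (D (i + 1) x) x)
    (hD_nonneg : ∀ i ≤ N, ∀ x ∈ Icc a b, 0 ≤ D i x)
    (hF_cont : ContinuousOn F (Icc a b)) (hF_deriv : ∀ x ∈ Ioo a b, HasDerivAt F (D 0 x) x)
    (hF_left : F a = 0) (hgrowth : ∀ x ∈ Icc a b, c * D 0 x ≤ D N x) :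
    ∀ j < N, ∀ x ∈ Icc a b, c / j.factorial * F x ^ j * D 0 x ≤ D (N - j) x * D 0 x ^ j := by
  intro j
  induction j with
  | zero => simpa using fun _ => hgrowth
  | succ j ih =>
    intro hj x hx
    have hleft : a ∈ Icc a b := left_mem_Icc.2 (hx.1.trans hx.2)
    have hidx : N - (j + 1) + 1 = N - j := by omega
    have hD_deriv' := hD_deriv (N - (j + 1)) (by omega)
    rw [hidx] at hD_deriv'
    have hcomp := sub_le_sub_of_hasDerivAt_le (u := fun y => D (N - (j + 1)) y * D 0 y ^ j)
      (v := fun y => c / (j + 1).factorial * F y ^ (j + 1))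
      ((hD_cont _ (by omega)).mul ((hD_cont 0 (by omega)).pow j))
      (continuousOn_const.mul (hF_cont.pow (j + 1)))
      (fun y hy => (hD_deriv' y hy).mul ((hD_deriv 0 (by omega) y hy).fun_pow j))
      (fun y hy => ((hF_deriv y hy).fun_pow (j + 1)).const_mul (c / (j + 1).factorial))
      (fun y hy => by
        have hyI := Ioo_subset_Icc_self hy
        have hrest : 0 ≤ D (N - (j + 1)) y * (j * D 0 y ^ (j - 1) * D (0 + 1) y) :=
          mul_nonneg (hD_nonneg _ (by omega) y hyI) (mul_nonneg (mul_nonneg (Nat.cast_nonneg j)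
            (pow_nonneg (hD_nonneg 0 (by omega) y hyI) _)) (hD_nonneg 1 (by omega) y hyI))
        have hfac : c / (j + 1).factorial * ((j + 1 : ℕ) * F y ^ (j + 1 - 1) * D 0 y)
            = c / j.factorial * F y ^ j * D 0 y := by
          rw [Nat.factorial_succ]; push_cast; field_simp
        rw [hfac]
        linarith [ih (by omega) y hyI])
      hx
    have hfx := hD_nonneg 0 (by omega) x hx
    have hstart : 0 ≤ D (N - (j + 1)) a * D 0 a ^ j :=
      mul_nonneg (hD_nonneg _ (by omega) a hleft) (pow_nonneg (hD_nonneg 0 (by omega) a hleft) _)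
    simp only [hF_left, zero_pow (Nat.succ_ne_zero j), mul_zero, sub_zero] at hcomp
    calc c / (j + 1).factorial * F x ^ (j + 1) * D 0 x
        ≤ D (N - (j + 1)) x * D 0 x ^ j * D 0 x := mul_le_mul_of_nonneg_right (by linarith) hfx
      _ = D (N - (j + 1)) x * D 0 x ^ (j + 1) := by ring

theorem pow_add_primitive_pow_le_of_growth (hN : N ≠ 0)
    (hD_cont : ∀ i < N, ContinuousOn (D i) (Icc a b))
    (hD_deriv : ∀ i < N, ∀ x ∈ Ioo a b, HasDerivAt (D i) (D (i + 1) x) x)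
    (hD_nonneg : ∀ i ≤ N, ∀ x ∈ Icc a b, 0 ≤ D i x)
    (hF_cont : ContinuousOn F (Icc a b)) (hF_deriv : ∀ x ∈ Ioo a b, HasDerivAt F (D 0 x) x)
    (hF_left : F a = 0) (hgrowth : ∀ x ∈ Icc a b, c * D 0 x ≤ D N x) {x : ℝ} (hx : x ∈ Icc a b) :
    D 0 a ^ N + c / (N - 1).factorial * F x ^ N ≤ D 0 x ^ N := by
  have hchain := primitive_pow_mul_le_of_growth hD_cont hD_deriv hD_nonneg hF_cont hF_deriv
    hF_left hgrowth (N - 1) (by omega)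
  rw [show N - (N - 1) = 1 by omega] at hchain
  have hcomp := sub_le_sub_of_hasDerivAt_le (u := fun y => D 0 y ^ N)
    (v := fun y => c / (N - 1).factorial * F y ^ N)
    ((hD_cont 0 (by omega)).pow N) (continuousOn_const.mul (hF_cont.pow N))
    (fun y hy => (hD_deriv 0 (by omega) y hy).fun_pow N)
    (fun y hy => ((hF_deriv y hy).fun_pow N).const_mul _)
    (fun y hy => calc
      _ = N * (c / (N - 1).factorial * F y ^ (N - 1) * D 0 y) := by ring
      _ ≤ N * (D 1 y * D 0 y ^ (N - 1)) :=
          mul_le_mul_of_nonneg_left (hchain y (Ioo_subset_Icc_self hy)) (Nat.cast_nonneg N)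
      _ = _ := by ring)
    hx
  simp only [hF_left, zero_pow hN, mul_zero, sub_zero] at hcomp
  linarith

end DerivativeChain

theorem factorial_div_sub_one_mul_div_factorial (m : ℕ) (C : ℝ) :
    ((m + 2).factorial : ℝ) / ((m + 2 : ℕ) - 1) * C / m.factorial = (m + 2 : ℕ) * C := by
  rw [show ((m + 2 : ℕ) : ℝ) - 1 = (m + 1 : ℕ) by push_cast; ring, Nat.factorial_succ,
    Nat.factorial_succ]
  push_cast
  field_simp
  ring

theorem pow_succ_add_mul_le_of_pow_add_le {N : ℕ} {p q r : ℝ} (hp : 0 ≤ p) (hq : 0 ≤ q)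
    (hr : 0 ≤ r) (h : p ^ (N + 1) + r ≤ q ^ (N + 1)) : p ^ (N + 2) + q * r ≤ q ^ (N + 2) := by
  have hpq : p ≤ q := (pow_le_pow_iff_left₀ hp hq N.add_one_ne_zero).1 (by linarith)
  calc p ^ (N + 2) + q * r = p * p ^ (N + 1) + q * r := by ring
    _ ≤ q * p ^ (N + 1) + q * r := by gcongr
    _ = q * (p ^ (N + 1) + r) := by ring
    _ ≤ q * q ^ (N + 1) := by gcongr
    _ = q ^ (N + 2) := by ring

theorem pow_add_mul_primitive_pow_le_of_iteratedDerivWithin {a b C : ℝ} {n : ℕ} {f : ℝ → ℝ}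
    (hab : a ≤ b) (hn : 2 ≤ n)
    (hf_diff : ∀ i < n - 1,
      DifferentiableOn ℝ (iteratedDerivWithin i f (Icc a b)) (Icc a b))
    (hf_nonneg : ∀ i ≤ n - 2, ∀ x ∈ Icc a b, 0 ≤ iteratedDerivWithin i f (Icc a b) x)
    (hC : 0 ≤ C)
    (hgrowth : ∀ x ∈ Icc a b,
      (n.factorial : ℝ) / ((n : ℝ) - 1) * f x * C ≤ iteratedDerivWithin (n - 1) f (Icc a b) x)
    {x : ℝ} (hx : x ∈ Icc a b) :
    f a ^ n + n * C * f x * (∫ t in a..x, f t) ^ (n - 1) ≤ f x ^ n := by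
  obtain ⟨m, rfl⟩ : ∃ m, n = m + 2 := ⟨n - 2, by omega⟩
  simp only [show m + 2 - 1 = m + 1 by omega, show m + 2 - 2 = m by omega]
    at hf_diff hf_nonneg hgrowth ⊢
  have hf_nonneg' : ∀ y ∈ Icc a b, 0 ≤ f y := by
    simpa only [iteratedDerivWithin_zero] using hf_nonneg 0 (Nat.zero_le m)
  have hf_cont : ContinuousOn f (Icc a b) := by
    simpa only [iteratedDerivWithin_zero] using (hf_diff 0 (Nat.succ_pos m)).continuousOn
  have hcoeff : (0 : ℝ) < (m + 2).factorial / ((m + 2 : ℕ) - 1) := by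
    apply div_pos (by positivity)
    push_cast
    linarith
  have hpow := pow_add_primitive_pow_le_of_growth (N := m + 1)
    (D := fun i => iteratedDerivWithin i f (Icc a b))
    (c := (m + 2).factorial / ((m + 2 : ℕ) - 1) * C) (Nat.succ_ne_zero m)
    (fun i hi => (hf_diff i hi).continuousOn)
    (fun i hi y hy => hasDerivAt_iteratedDerivWithin_of_mem_nhds
      (hf_diff i hi y (Ioo_subset_Icc_self hy)) (Icc_mem_nhds hy.1 hy.2))
    (fun i hi y hy => by
      rcases Nat.le_succ_iff.1 hi with hi | rfl
      · exact hf_nonneg i hi y hy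
      · exact (mul_nonneg (mul_nonneg hcoeff.le (hf_nonneg' y hy)) hC).trans (hgrowth y hy))
    (continuousOn_primitive_Icc hab hf_cont)
    (fun y hy => by
      simpa only [iteratedDerivWithin_zero] using hasDerivAt_primitive_of_mem_Ioo hf_cont hy)
    integral_same
    (fun y hy => by
      simp only [iteratedDerivWithin_zero]
      linarith [hgrowth y hy])
    hx
  simp only [iteratedDerivWithin_zero, add_tsub_cancel_right,
    factorial_div_sub_one_mul_div_factorial] at hpow
  have hF : 0 ≤ ∫ t in a..x, f t :=
    integral_nonneg hx.1 fun t ht => hf_nonneg' t ⟨ht.1, ht.2.trans hx.2⟩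
  have := pow_succ_add_mul_le_of_pow_add_le (hf_nonneg' a (left_mem_Icc.2 hab)) (hf_nonneg' x hx)
    (by positivity) hpow
  linarith

section Integrals

variable {a b : ℝ} {f g : ℝ → ℝ}

theorem integral_mul_le_mul_integral_of_monotoneOn (hab : a ≤ b)
    (hfg : IntervalIntegrable (fun t => f t * g t) volume a b)
    (hf : IntervalIntegrable f volume a b) (hf_nonneg : ∀ x ∈ Icc a b, 0 ≤ f x)
    (hg_mono : MonotoneOn g (Icc a b)) :
    ∫ t in a..b, f t * g t ≤ g b * ∫ t in a..b, f t := by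
  rw [mul_comm, ← intervalIntegral.integral_mul_const]
  exact integral_mono_on hab hfg (hf.mul_const (g b)) fun t ht =>
    mul_le_mul_of_nonneg_left (hg_mono ht (right_mem_Icc.2 hab) ht.2) (hf_nonneg t ht)

theorem ite_rpow_le_rpow_of_monotoneOn (hg_pos : ∀ x ∈ Icc a b, 0 < g x)
    (hg_mono : MonotoneOn g (Icc a b)) (α : ℝ) {x : ℝ} (hx : x ∈ Icc a b) :
    (if 0 ≤ α then g a ^ α else g b ^ α) ≤ g x ^ α := by
  have ha : a ∈ Icc a b := left_mem_Icc.2 (hx.1.trans hx.2)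
  have hb : b ∈ Icc a b := right_mem_Icc.2 (hx.1.trans hx.2)
  split_ifs with hα
  · exact Real.rpow_le_rpow (hg_pos a ha).le (hg_mono ha hx hx.1) hα
  · exact Real.rpow_le_rpow_of_nonpos (hg_pos x hx) (hg_mono hx hb hx.2) (not_le.1 hα).le

theorem pow_mul_ite_add_primitive_pow_le {n : ℕ} {α : ℝ} (hn : n ≠ 0) (hα : α ≤ n)
    (hf_cont : ContinuousOn f (Icc a b)) (hf_nonneg : ∀ x ∈ Icc a b, 0 ≤ f x)
    (hg_pos : ∀ x ∈ Icc a b, 0 < g x) (hg_cont : ContinuousOn g (Icc a b))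
    (hg_mono : MonotoneOn g (Icc a b)) {x : ℝ} (hx : x ∈ Icc a b)
    (hpow : f a ^ n + n * g b ^ ((n : ℝ) - α) * f x * (∫ t in a..x, f t) ^ (n - 1) ≤ f x ^ n) :
    f a ^ n * (if 0 ≤ α then g a ^ α else g b ^ α) +
        n * (∫ t in a..x, f t * g t) ^ (n - 1) * (f x * g x) ≤
      f x ^ n * g x ^ α := by
  obtain ⟨k, rfl⟩ : ∃ k, n = k + 1 := ⟨n - 1, by omega⟩
  rw [add_tsub_cancel_right] at hpow ⊢
  have hsub : Icc a x ⊆ Icc a b := Icc_subset_Icc_right hx.2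
  have hleft : a ∈ Icc a b := left_mem_Icc.2 (hx.1.trans hx.2)
  have hgx := hg_pos x hx
  set F := ∫ t in a..x, f t
  set P := ∫ t in a..x, f t * g t
  set C := g b ^ ((k + 1 : ℕ) - α)
  have hF : 0 ≤ F := integral_nonneg hx.1 fun t ht => hf_nonneg t (hsub ht)
  have hP : 0 ≤ P := integral_nonneg hx.1 fun t ht =>
    mul_nonneg (hf_nonneg t (hsub ht)) (hg_pos t (hsub ht)).le
  have hPF : P ≤ g x * F := integral_mul_le_mul_integral_of_monotoneOn hx.1
    (((hf_cont.mul hg_cont).mono hsub).intervalIntegrable_of_Icc hx.1)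
    ((hf_cont.mono hsub).intervalIntegrable_of_Icc hx.1)
    (fun t ht => hf_nonneg t (hsub ht)) (hg_mono.mono hsub)
  have hgC : g x ^ (k + 1) ≤ C * g x ^ α := calc
    g x ^ (k + 1) = g x ^ ((k + 1 : ℕ) - α) * g x ^ α := by
      rw [← Real.rpow_add hgx, sub_add_cancel, Real.rpow_natCast]
    _ ≤ C * g x ^ α := mul_le_mul_of_nonneg_right
      (Real.rpow_le_rpow hgx.le (hg_mono hx (right_mem_Icc.2 (hx.1.trans hx.2)) hx.2)
        (sub_nonneg.2 hα)) (Real.rpow_nonneg hgx.le α)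
  have hfa := hf_nonneg a hleft
  have hfx := hf_nonneg x hx
  calc f a ^ (k + 1) * (if 0 ≤ α then g a ^ α else g b ^ α) + (k + 1 : ℕ) * P ^ k * (f x * g x)
      ≤ f a ^ (k + 1) * g x ^ α + (k + 1 : ℕ) * (g x * F) ^ k * (f x * g x) := by
        gcongr
        exact ite_rpow_le_rpow_of_monotoneOn hg_pos hg_mono α hx
    _ = f a ^ (k + 1) * g x ^ α + g x ^ (k + 1) * ((k + 1 : ℕ) * f x * F ^ k) := by ring
    _ ≤ f a ^ (k + 1) * g x ^ α + C * g x ^ α * ((k + 1 : ℕ) * f x * F ^ k) := by gcongr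
    _ = g x ^ α * (f a ^ (k + 1) + (k + 1 : ℕ) * C * f x * F ^ k) := by ring
    _ ≤ g x ^ α * f x ^ (k + 1) := by gcongr
    _ = f x ^ (k + 1) * g x ^ α := mul_comm _ _

theorem mul_pow_add_integral_pow_le_integral_pow_mul_rpow {n : ℕ} {α : ℝ} (hab : a ≤ b)
    (hn : n ≠ 0) (hα : α ≤ n)
    (hf_cont : ContinuousOn f (Icc a b)) (hf_nonneg : ∀ x ∈ Icc a b, 0 ≤ f x)
    (hg_pos : ∀ x ∈ Icc a b, 0 < g x) (hg_cont : ContinuousOn g (Icc a b))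
    (hg_mono : MonotoneOn g (Icc a b))
    (hpow : ∀ x ∈ Icc a b,
      f a ^ n + n * g b ^ ((n : ℝ) - α) * f x * (∫ t in a..x, f t) ^ (n - 1) ≤ f x ^ n) :
    (b - a) * f a ^ n * (if 0 ≤ α then g a ^ α else g b ^ α) + (∫ x in a..b, f x * g x) ^ n ≤
      ∫ x in a..b, f x ^ n * g x ^ α := by
  set K := if 0 ≤ α then g a ^ α else g b ^ α
  have hfg : ContinuousOn (fun t => f t * g t) (Icc a b) := hf_cont.mul hg_cont
  have hfg' : ContinuousOn (fun t => f t ^ n * g t ^ α) (Icc a b) :=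
    (hf_cont.pow n).mul (hg_cont.rpow_const fun x hx => Or.inl (hg_pos x hx).ne')
  have hcomp := sub_le_sub_of_hasDerivAt_le
    (u := fun x => ∫ t in a..x, f t ^ n * g t ^ α)
    (v := fun x => (x - a) * (f a ^ n * K) + (∫ t in a..x, f t * g t) ^ n)
    (continuousOn_primitive_Icc hab hfg')
    (((continuousOn_id.sub continuousOn_const).mul continuousOn_const).add
      ((continuousOn_primitive_Icc hab hfg).pow n))
    (fun x hx => hasDerivAt_primitive_of_mem_Ioo hfg' hx)
    (fun x hx => (((hasDerivAt_id x).sub_const a).mul_const _).add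
      ((hasDerivAt_primitive_of_mem_Ioo hfg hx).fun_pow n))
    (fun x hx => by
      simpa only [one_mul] using pow_mul_ite_add_primitive_pow_le hn hα hf_cont hf_nonneg hg_pos
        hg_cont hg_mono (Ioo_subset_Icc_self hx) (hpow x (Ioo_subset_Icc_self hx)))
    (right_mem_Icc.2 hab)
  simp only [sub_self, zero_mul, integral_same, zero_pow hn, add_zero, sub_zero] at hcomp
  linarith

end Integrals

theorem stmt15 (a b : ℝ) (hab : a < b) (n : ℕ) (hn : 2 ≤ n)
    (f : ℝ → ℝ)
    (hf_diff : ∀ i < n - 1,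
      DifferentiableOn ℝ (iteratedDerivWithin i f (Set.Icc a b)) (Set.Icc a b))
    (hf_nonneg : ∀ i ≤ n - 2, ∀ x ∈ Set.Icc a b,
      0 ≤ iteratedDerivWithin i f (Set.Icc a b) x)
    (g : ℝ → ℝ) (hg_pos : ∀ x ∈ Set.Icc a b, 0 < g x)
    (hg_cont : ContinuousOn g (Set.Icc a b))
    (hg_mono : MonotoneOn g (Set.Icc a b))
    (α : ℝ) (hα : α ≤ (n : ℝ))
    (hgrowth : ∀ x ∈ Set.Icc a b,
      ((n.factorial : ℝ) / ((n : ℝ) - 1)) * f x *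
          sSup (g '' Set.Icc a b) ^ ((n : ℝ) - α) ≤
        iteratedDerivWithin (n - 1) f (Set.Icc a b) x) :
    (b - a) * f a ^ n * (if 0 ≤ α then g a ^ α else g b ^ α) +
      (∫ x in a..b, f x * g x) ^ n ≤
    ∫ x in a..b, f x ^ n * g x ^ α := by
  rw [(hg_mono.map_isGreatest (isGreatest_Icc hab.le)).csSup_eq] at hgrowth
  have hf_nonneg' : ∀ x ∈ Icc a b, 0 ≤ f x := by
    simpa only [iteratedDerivWithin_zero] using hf_nonneg 0 (Nat.zero_le _)
  have hf_cont : ContinuousOn f (Icc a b) := by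
    simpa only [iteratedDerivWithin_zero] using (hf_diff 0 (by omega)).continuousOn
  have hgb : 0 ≤ g b ^ ((n : ℝ) - α) := Real.rpow_nonneg (hg_pos b (right_mem_Icc.2 hab.le)).le _
  exact mul_pow_add_integral_pow_le_integral_pow_mul_rpow hab.le (by omega) hα hf_cont hf_nonneg'
    hg_pos hg_cont hg_mono fun x hx =>
      pow_add_mul_primitive_pow_le_of_iteratedDerivWithin hab.le hn hf_diff hf_nonneg hgb hgrowth hx
end

section
/- Let n ≥ 2 and let f be an (n-1)-times differentiable function on [a,b] with f⁽ⁱ⁾ ≥ 0 for i = 0,…,n-2, and let g be a strictly positive, increasing function on [a,b] belonging to D₊[a,b] or D₋[a,b]. If f⁽ⁿ⁻¹⁾·g ≥ (n!/(n-1))·f on [a,b], then (b-a)·f(a)ⁿ·g(a) + (∫_a^b f)ⁿ ≤ ∫_a^b fⁿ·g. -/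
/-!
Write `n = k + 2`, `F₁ x = ∫ a..x, f` and `F_j` for the `j`-th iterated primitive of `f` from `a`.
Fix `x ∈ [a,b]`. Since `g` is increasing, on `[a,x]` the hypothesis reads
`n k! f ≤ f⁽ᵏ⁺¹⁾ g(x)`; integrating it `k` times from `a`, where the primitives vanish and the
derivatives of `f` are nonnegative, gives `n k! F_k ≤ f' g(x)`. Comparing derivatives also gives
`F₁ᵏ f ≤ k! F_k fᵏ`, hence `n F₁ᵏ f ≤ g(x) fᵏ f'`, and two more comparisons of derivatives give
`g(x) f(a)ⁿ + n F₁(x)ⁿ⁻¹ f(x) ≤ g(x) f(x)ⁿ`. Since `g(a) ≤ g(x)` and `n F₁ⁿ⁻¹ f` is the derivative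
of `F₁ⁿ`, integrating over `[a,b]` gives the claim.
-/

open Set MeasureTheory intervalIntegral
open scoped Nat

/-- `D₊[a,b]`: continuous functions on `[a,b]` having a right-derivative at every
point of `(a,b)`. -/
def DPlus (a b : ℝ) (h : ℝ → ℝ) : Prop :=
  ContinuousOn h (Set.Icc a b) ∧ ∀ x ∈ Set.Ioo a b, ∃ L : ℝ, HasDerivWithinAt h L (Set.Ioi x) x

/-- `D₋[a,b]`: continuous functions on `[a,b]` having a left-derivative at every
point of `(a,b)`. -/
def DMinus (a b : ℝ) (h : ℝ → ℝ) : Prop :=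
  ContinuousOn h (Set.Icc a b) ∧ ∀ x ∈ Set.Ioo a b, ∃ L : ℝ, HasDerivWithinAt h L (Set.Iio x) x

theorem le_of_hasDerivAt_le {u v u' v' : ℝ → ℝ} {a b t : ℝ} (ht : t ∈ Icc a b)
    (hu : ContinuousOn u (Icc a b)) (hv : ContinuousOn v (Icc a b))
    (hu' : ∀ x ∈ Ioo a b, HasDerivAt u (u' x) x) (hv' : ∀ x ∈ Ioo a b, HasDerivAt v (v' x) x)
    (hle' : ∀ x ∈ Ioo a t, u' x ≤ v' x) (hle : u a ≤ v a) : u t ≤ v t := by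
  have hsub : Ioo a t ⊆ Ioo a b := Ioo_subset_Ioo_right ht.2
  have hmono : MonotoneOn (fun x => v x - u x) (Icc a t) := by
    refine monotoneOn_of_hasDerivWithinAt_nonneg (f' := fun x => v' x - u' x) (convex_Icc a t)
      ((hv.sub hu).mono (Icc_subset_Icc_right ht.2)) (fun x hx => ?_) (fun x hx => ?_) <;>
      rw [interior_Icc] at hx
    · exact ((hv' x (hsub hx)).sub (hu' x (hsub hx))).hasDerivWithinAt
    · exact sub_nonneg.2 (hle' x hx)
  have := hmono (left_mem_Icc.2 ht.1) (right_mem_Icc.2 ht.1) ht.1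
  linarith

theorem hasDerivAt_iteratedDerivWithin_Icc {f : ℝ → ℝ} {a b x : ℝ} {i : ℕ}
    (hf : DifferentiableOn ℝ (iteratedDerivWithin i f (Icc a b)) (Icc a b)) (hx : x ∈ Ioo a b) :
    HasDerivAt (iteratedDerivWithin i f (Icc a b))
      (iteratedDerivWithin (i + 1) f (Icc a b) x) x := by
  rw [iteratedDerivWithin_succ]
  exact (hf x (Ioo_subset_Icc_self hx)).hasDerivWithinAt.hasDerivAt (Icc_mem_nhds hx.1 hx.2)

theorem factorial_add_two_div (k : ℕ) : ((k + 2)! : ℝ) / ((k : ℝ) + 2 - 1) = (k + 2) * k ! := by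
  rw [show (k : ℝ) + 2 - 1 = k + 1 by ring, div_eq_iff (by positivity)]
  push_cast [Nat.factorial_succ]
  ring

noncomputable def iteratedPrimitive (f : ℝ → ℝ) (a : ℝ) : ℕ → ℝ → ℝ
  | 0 => f
  | j + 1 => fun x => ∫ t in a..x, iteratedPrimitive f a j t

section iteratedPrimitive

variable {f : ℝ → ℝ} {a b : ℝ}

@[simp] theorem iteratedPrimitive_zero : iteratedPrimitive f a 0 = f := rfl

@[simp] theorem iteratedPrimitive_succ_self (j : ℕ) : iteratedPrimitive f a (j + 1) a = 0 :=
  integral_same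

theorem continuousOn_iteratedPrimitive (hf : ContinuousOn f (Icc a b)) (j : ℕ) :
    ContinuousOn (iteratedPrimitive f a j) (Icc a b) := by
  rcases le_or_gt a b with hab | hba
  · induction j with
    | zero => exact hf
    | succ j ih =>
      rw [← uIcc_of_le hab] at ih ⊢
      exact continuousOn_primitive_interval (ih.integrableOn_compact isCompact_uIcc)
  · simp [Icc_eq_empty_of_lt hba]

theorem hasDerivAt_iteratedPrimitive (hf : ContinuousOn f (Icc a b)) (j : ℕ) {x : ℝ}
    (hx : x ∈ Ioo a b) :
    HasDerivAt (iteratedPrimitive f a (j + 1)) (iteratedPrimitive f a j x) x := by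
  have hc := continuousOn_iteratedPrimitive hf j
  have hc' := hc.mono Ioo_subset_Icc_self
  refine integral_hasDerivAt_right ?_ (hc'.stronglyMeasurableAtFilter isOpen_Ioo x hx)
    (hc'.continuousAt (isOpen_Ioo.mem_nhds hx))
  refine (hc.mono ?_).intervalIntegrable
  rw [uIcc_of_le hx.1.le]
  exact Icc_subset_Icc_right hx.2.le

theorem iteratedPrimitive_nonneg (hf : ∀ x ∈ Icc a b, 0 ≤ f x) (j : ℕ) :
    ∀ x ∈ Icc a b, 0 ≤ iteratedPrimitive f a j x := by
  induction j with
  | zero => exact hf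
  | succ j ih => exact fun x hx => integral_nonneg hx.1 fun t ht => ih t ⟨ht.1, ht.2.trans hx.2⟩

end iteratedPrimitive

theorem mul_iteratedPrimitive_le {f : ℝ → ℝ} {d : ℕ → ℝ → ℝ} {a b c G : ℝ} {k : ℕ}
    (hf : ContinuousOn f (Icc a b)) (hdc : ∀ i < k, ContinuousOn (d i) (Icc a b))
    (hd : ∀ i < k, ∀ y ∈ Ioo a b, HasDerivAt (d i) (d (i + 1) y) y)
    (hda : ∀ i < k, 0 ≤ d i a) (hG : 0 ≤ G) (htop : ∀ t ∈ Icc a b, c * f t ≤ d k t * G)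
    (j i : ℕ) (hij : i + j = k) :
    ∀ t ∈ Icc a b, c * iteratedPrimitive f a j t ≤ d i t * G := by
  induction j generalizing i with
  | zero => subst hij; exact htop
  | succ j ih =>
    have hik : i < k := by omega
    intro t ht
    refine le_of_hasDerivAt_le (u := fun t => c * iteratedPrimitive f a (j + 1) t)
      (v := fun t => d i t * G) ht
      (continuousOn_const.mul (continuousOn_iteratedPrimitive hf _))
      ((hdc i hik).mul continuousOn_const)
      (fun y hy => (hasDerivAt_iteratedPrimitive hf j hy).const_mul c)
      (fun y hy => (hd i hik y hy).mul_const G)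
      (fun y hy => ih (i + 1) (by omega) y ⟨hy.1.le, hy.2.le.trans ht.2⟩) ?_
    simpa using mul_nonneg (hda i hik) hG

theorem iteratedPrimitive_one_pow_mul_le {f f' : ℝ → ℝ} {a b : ℝ}
    (hf : ContinuousOn f (Icc a b)) (hf' : ∀ x ∈ Ioo a b, HasDerivAt f (f' x) x)
    (hf0 : ∀ x ∈ Icc a b, 0 ≤ f x) (hf'0 : ∀ x ∈ Ioo a b, 0 ≤ f' x) (m : ℕ) :
    ∀ x ∈ Icc a b,
      iteratedPrimitive f a 1 x ^ m * f x ≤ m ! * iteratedPrimitive f a m x * f x ^ m := by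
  set F := iteratedPrimitive f a
  induction m with
  | zero => simp [F]
  | succ m ih =>
    intro x hx
    have hle : F 1 x ^ (m + 1) ≤ (m + 1)! * F (m + 1) x * f x ^ m := by
      refine le_of_hasDerivAt_le (u := fun x => F 1 x ^ (m + 1))
        (v := fun x => (m + 1)! * F (m + 1) x * f x ^ m) hx
        ((continuousOn_iteratedPrimitive hf 1).pow _)
        ((continuousOn_const.mul (continuousOn_iteratedPrimitive hf _)).mul (hf.pow m))
        (fun y hy => (hasDerivAt_iteratedPrimitive hf 0 hy).pow (m + 1))
        (fun y hy => ((hasDerivAt_iteratedPrimitive hf m hy).const_mul _).mul ((hf' y hy).pow m))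
        (fun y hy => ?_) (by simp [F])
      have hy' : y ∈ Ioo a b := ⟨hy.1, hy.2.trans_le hx.2⟩
      have hIH := ih y (Ioo_subset_Icc_self hy')
      have hrest : 0 ≤ (m + 1)! * F (m + 1) y * (m * f y ^ (m - 1) * f' y) := by
        have := iteratedPrimitive_nonneg hf0 (m + 1) y (Ioo_subset_Icc_self hy')
        have := hf0 y (Ioo_subset_Icc_self hy')
        have := hf'0 y hy'
        positivity
      simp only [add_tsub_cancel_right, iteratedPrimitive_zero, Nat.factorial_succ,
        Nat.cast_mul, Nat.cast_add_one] at hrest ⊢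
      linear_combination (↑m + 1) * hIH + hrest
    calc F 1 x ^ (m + 1) * f x ≤ (m + 1)! * F (m + 1) x * f x ^ m * f x :=
          mul_le_mul_of_nonneg_right hle (hf0 x hx)
      _ = _ := by ring

section PointwiseBound

variable {f f' P : ℝ → ℝ} {a b G : ℝ} {k : ℕ}

theorem add_two_mul_pow_succ_le (hf : ContinuousOn f (Icc a b))
    (hf' : ∀ y ∈ Ioo a b, HasDerivAt f (f' y) y) (hP : ContinuousOn P (Icc a b))
    (hP' : ∀ y ∈ Ioo a b, HasDerivAt P (f y) y) (hPa : P a = 0) (hfa : 0 ≤ f a) (hG : 0 ≤ G)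
    (hkey : ∀ y ∈ Ioo a b, (k + 2) * (P y ^ k * f y) ≤ G * f y ^ k * f' y) :
    ∀ t ∈ Icc a b, (k + 2) * P t ^ (k + 1) ≤ G * f t ^ (k + 1) := by
  intro t ht
  refine le_of_hasDerivAt_le (u := fun t => (k + 2) * P t ^ (k + 1))
    (v := fun t => G * f t ^ (k + 1)) ht
    (continuousOn_const.mul (hP.pow _)) (continuousOn_const.mul (hf.pow _))
    (fun y hy => ((hP' y hy).pow (k + 1)).const_mul _)
    (fun y hy => ((hf' y hy).pow (k + 1)).const_mul G)
    (fun y hy => ?_) (by simp [hPa]; positivity)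
  have := hkey y ⟨hy.1, hy.2.trans_le ht.2⟩
  simp only [add_tsub_cancel_right, Nat.cast_add_one]
  linear_combination (k + 1) * this

theorem mul_pow_add_mul_pow_le (hab : a ≤ b) (hf : ContinuousOn f (Icc a b))
    (hf' : ∀ y ∈ Ioo a b, HasDerivAt f (f' y) y) (hP : ContinuousOn P (Icc a b))
    (hP' : ∀ y ∈ Ioo a b, HasDerivAt P (f y) y) (hPa : P a = 0)
    (hf0 : ∀ y ∈ Icc a b, 0 ≤ f y) (hf'0 : ∀ y ∈ Ioo a b, 0 ≤ f' y) (hG : 0 ≤ G)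
    (hkey : ∀ y ∈ Ioo a b, (k + 2) * (P y ^ k * f y) ≤ G * f y ^ k * f' y) :
    G * f a ^ (k + 2) + (k + 2) * (P b ^ (k + 1) * f b) ≤ G * f b ^ (k + 2) := by
  have hpow := add_two_mul_pow_succ_le hf hf' hP hP' hPa (hf0 a (left_mem_Icc.2 hab)) hG hkey
  refine le_of_hasDerivAt_le (u := fun t => G * f a ^ (k + 2) + (k + 2) * (P t ^ (k + 1) * f t))
    (v := fun t => G * f t ^ (k + 2)) (right_mem_Icc.2 hab)
    (continuousOn_const.add (continuousOn_const.mul ((hP.pow _).mul hf)))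
    (continuousOn_const.mul (hf.pow _))
    (fun y hy => (((hP' y hy).pow (k + 1)).mul (hf' y hy)).const_mul _ |>.const_add _)
    (fun y hy => ((hf' y hy).pow (k + 2)).const_mul G)
    (fun y hy => ?_) (by simp [hPa])
  have h1 := hkey y hy
  have h2 := hpow y (Ioo_subset_Icc_self hy)
  have hfy := hf0 y (Ioo_subset_Icc_self hy)
  have hf'y := hf'0 y hy
  simp only [Pi.pow_apply, Nat.add_succ_sub_one, Nat.cast_add_one]
  linear_combination (k + 1) * f y * h1 + f' y * h2

end PointwiseBound

theorem mul_pow_add_integral_pow_le_of_growth {f g : ℝ → ℝ} {d : ℕ → ℝ → ℝ} {a b : ℝ} {k : ℕ}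
    (hab : a ≤ b) (hf : ContinuousOn f (Icc a b)) (hf' : ∀ y ∈ Ioo a b, HasDerivAt f (d 0 y) y)
    (hdc : ∀ i < k, ContinuousOn (d i) (Icc a b))
    (hd : ∀ i < k, ∀ y ∈ Ioo a b, HasDerivAt (d i) (d (i + 1) y) y)
    (hf0 : ∀ y ∈ Icc a b, 0 ≤ f y) (hda : ∀ i < k, 0 ≤ d i a)
    (hg : ∀ y ∈ Icc a b, 0 < g y) (hg_mono : MonotoneOn g (Icc a b))
    (hgrowth : ∀ y ∈ Icc a b, (k + 2) * k ! * f y ≤ d k y * g y) :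
    g b * f a ^ (k + 2) + (k + 2) * ((∫ t in a..b, f t) ^ (k + 1) * f b) ≤
      g b * f b ^ (k + 2) := by
  have hb := right_mem_Icc.2 hab
  have hgrowth_b : ∀ y ∈ Icc a b, (k + 2) * k ! * f y ≤ d k y * g b := fun y hy => by
    have hC : 0 ≤ (k + 2) * k ! * f y := by have := hf0 y hy; positivity
    have hdk := nonneg_of_mul_nonneg_left (hC.trans (hgrowth y hy)) (hg y hy)
    exact (hgrowth y hy).trans (mul_le_mul_of_nonneg_left (hg_mono hy hb hy.2) hdk)
  have hchain := mul_iteratedPrimitive_le hf hdc hd hda (hg b hb).le hgrowth_b k 0 (zero_add k)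
  have hf'0 : ∀ y ∈ Ioo a b, 0 ≤ d 0 y := fun y hy => by
    have hF := iteratedPrimitive_nonneg hf0 k y (Ioo_subset_Icc_self hy)
    have hC : 0 ≤ (k + 2) * k ! * iteratedPrimitive f a k y := by positivity
    exact nonneg_of_mul_nonneg_left (hC.trans (hchain y (Ioo_subset_Icc_self hy))) (hg b hb)
  have hpow := iteratedPrimitive_one_pow_mul_le hf hf' hf0 hf'0 k
  refine mul_pow_add_mul_pow_le (P := fun x => ∫ t in a..x, f t) hab hf hf'
    (continuousOn_iteratedPrimitive hf 1) (fun y hy => hasDerivAt_iteratedPrimitive hf 0 hy)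
    integral_same hf0 hf'0 (hg b hb).le fun y hy => ?_
  have h1 : (∫ t in a..y, f t) ^ k * f y ≤ _ := hpow y (Ioo_subset_Icc_self hy)
  have h2 := hchain y (Ioo_subset_Icc_self hy)
  have hfk := pow_nonneg (hf0 y (Ioo_subset_Icc_self hy)) k
  linear_combination (k + 2) * h1 + f y ^ k * h2

theorem integral_pow_le_of_forall_le {f g : ℝ → ℝ} {a b c : ℝ} {n : ℕ} (hab : a ≤ b)
    (hf : ContinuousOn f (Icc a b)) (hg : IntervalIntegrable g volume a b)
    (h : ∀ x ∈ Icc a b, c + (n + 1) * ((∫ t in a..x, f t) ^ n * f x) ≤ f x ^ (n + 1) * g x) :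
    (b - a) * c + (∫ x in a..b, f x) ^ (n + 1) ≤ ∫ x in a..b, f x ^ (n + 1) * g x := by
  have hP : ContinuousOn (fun x => ∫ t in a..x, f t) (Icc a b) :=
    continuousOn_iteratedPrimitive hf 1
  have hint :
      IntervalIntegrable (fun x => (n + 1) * ((∫ t in a..x, f t) ^ n * f x)) volume a b := by
    refine ContinuousOn.intervalIntegrable ?_
    rw [uIcc_of_le hab]
    exact continuousOn_const.mul ((hP.pow n).mul hf)
  have hFTC : ∫ x in a..b, (n + 1) * ((∫ t in a..x, f t) ^ n * f x) =
      (∫ x in a..b, f x) ^ (n + 1) := by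
    rw [integral_eq_sub_of_hasDerivAt_of_le hab (hP.pow (n + 1)) (fun x hx => ?_) hint]
    · simp
    · have hd : HasDerivAt (fun x => ∫ t in a..x, f t) (f x) x :=
        hasDerivAt_iteratedPrimitive hf 0 hx
      exact (hd.pow (n + 1)).congr_deriv (by rw [add_tsub_cancel_right]; push_cast; ring)
  calc (b - a) * c + (∫ x in a..b, f x) ^ (n + 1)
      = ∫ x in a..b, (c + (n + 1) * ((∫ t in a..x, f t) ^ n * f x)) := by
        rw [integral_add intervalIntegrable_const hint, intervalIntegral.integral_const,
          smul_eq_mul, hFTC]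
    _ ≤ ∫ x in a..b, f x ^ (n + 1) * g x :=
        integral_mono_on hab (intervalIntegrable_const.add hint)
          (hg.continuousOn_mul (by rw [uIcc_of_le hab]; exact hf.pow _)) h

theorem stmt17_general (a b : ℝ) (hab : a < b) (n : ℕ) (hn : 2 ≤ n)
    (f : ℝ → ℝ)
    (hf_diff : ∀ i < n - 1,
      DifferentiableOn ℝ (iteratedDerivWithin i f (Set.Icc a b)) (Set.Icc a b))
    (hf_nonneg : ∀ i ≤ n - 2, ∀ x ∈ Set.Icc a b,
      0 ≤ iteratedDerivWithin i f (Set.Icc a b) x)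
    (g : ℝ → ℝ) (hg_pos : ∀ x ∈ Set.Icc a b, 0 < g x)
    (hg_mono : MonotoneOn g (Set.Icc a b))
    (hgrowth : ∀ x ∈ Set.Icc a b,
      ((n.factorial : ℝ) / ((n : ℝ) - 1)) * f x ≤
        iteratedDerivWithin (n - 1) f (Set.Icc a b) x * g x) :
    (b - a) * f a ^ n * g a + (∫ x in a..b, f x) ^ n ≤
      ∫ x in a..b, f x ^ n * g x := by
  obtain ⟨k, rfl⟩ : ∃ k, n = k + 2 := ⟨n - 2, by omega⟩
  set s := Icc a b
  set d : ℕ → ℝ → ℝ := fun i => iteratedDerivWithin (i + 1) f s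
  have hd : ∀ i ≤ k, ∀ x ∈ Ioo a b, HasDerivAt (iteratedDerivWithin i f s) (d i x) x :=
    fun i hi x hx => hasDerivAt_iteratedDerivWithin_Icc (hf_diff i (by omega)) hx
  have hfc : ContinuousOn f s := by simpa using (hf_diff 0 (by omega)).continuousOn
  have hf' : ∀ x ∈ Ioo a b, HasDerivAt f (d 0 x) x := by
    simpa only [iteratedDerivWithin_zero] using hd 0 k.zero_le
  have hf0 : ∀ x ∈ s, 0 ≤ f x := by simpa using hf_nonneg 0 (by omega)
  rw [show k + 2 - 1 = k + 1 by omega] at hgrowth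
  simp only [Nat.cast_add, Nat.cast_ofNat, factorial_add_two_div] at hgrowth
  rw [mul_assoc]
  refine integral_pow_le_of_forall_le hab.le hfc
    (MonotoneOn.intervalIntegrable (by rwa [uIcc_of_le hab.le])) fun x hx => ?_
  have hsub : Icc a x ⊆ s := Icc_subset_Icc_right hx.2
  have hsub' : Ioo a x ⊆ Ioo a b := Ioo_subset_Ioo_right hx.2
  have hE := mul_pow_add_integral_pow_le_of_growth hx.1 (hfc.mono hsub)
    (fun y hy => hf' y (hsub' hy))
    (fun i _ => (hf_diff (i + 1) (by omega)).continuousOn.mono hsub)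
    (fun i _ y hy => hd (i + 1) (by omega) y (hsub' hy)) (fun y hy => hf0 y (hsub hy))
    (fun i _ => hf_nonneg (i + 1) (by omega) a (left_mem_Icc.2 hab.le))
    (fun y hy => hg_pos y (hsub hy)) (hg_mono.mono hsub) (fun y hy => hgrowth y (hsub hy))
  have hga := mul_le_mul_of_nonneg_left (hg_mono (left_mem_Icc.2 hab.le) hx hx.1)
    (pow_nonneg (hf0 a (left_mem_Icc.2 hab.le)) (k + 2))
  push_cast
  linear_combination hE + hga

theorem stmt17 (a b : ℝ) (hab : a < b) (n : ℕ) (hn : 2 ≤ n)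
    (f : ℝ → ℝ)
    (hf_diff : ∀ i < n - 1,
      DifferentiableOn ℝ (iteratedDerivWithin i f (Set.Icc a b)) (Set.Icc a b))
    (hf_nonneg : ∀ i ≤ n - 2, ∀ x ∈ Set.Icc a b,
      0 ≤ iteratedDerivWithin i f (Set.Icc a b) x)
    (g : ℝ → ℝ) (hg_pos : ∀ x ∈ Set.Icc a b, 0 < g x)
    (hg_mono : MonotoneOn g (Set.Icc a b))
    (hD : DPlus a b g ∨ DMinus a b g)
    (hgrowth : ∀ x ∈ Set.Icc a b,
      ((n.factorial : ℝ) / ((n : ℝ) - 1)) * f x ≤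
        iteratedDerivWithin (n - 1) f (Set.Icc a b) x * g x) :
    (b - a) * f a ^ n * g a + (∫ x in a..b, f x) ^ n ≤
      ∫ x in a..b, f x ^ n * g x :=
  stmt17_general a b hab n hn f hf_diff hf_nonneg g hg_pos hg_mono hgrowth
end
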